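/- Let Z ⊂ W° be a partition. Then for every bounded Borel function f on 𝓘 := ⊔_{b ∈ A} I_b one has ∫_{Λ_Γ} f dμ = ∫_{Λ_Γ} 𝓛_Z f dμ, where the transfer operator 𝓛_Z is defined for x ∈ I_b by 𝓛_Z f(x) = Σ_{𝐚 ∈ Z, 𝐚 ⇝ b} f(γ_{𝐚'}(x)) w_{𝐚'}(x), with weight w_𝐜(x) := |γ'_𝐜(x)|_B^δ. -/

import Mathlib

open MeasureTheory Set Real Pointwise

noncomputable section

abbrev SL2 := Matrix.SpecialLinearGroup (Fin 2) ℝ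

/-- The Möbius transformation of `ℝ` associated to `g ∈ SL(2,ℝ)` (junk value at the pole). -/
def mobius (g : SL2) (x : ℝ) : ℝ :=
  (g 0 0 * x + g 0 1) / (g 1 0 * x + g 1 1)

/-- The derivative `γ'(x) = (cx+d)⁻²` of the Möbius transformation. -/
def mobiusDeriv (g : SL2) (x : ℝ) : ℝ :=
  ((g 1 0 * x + g 1 1) ^ 2)⁻¹

/-- The derivative of the Möbius transformation in the ball model,
`|γ'(x)|_B = ((1+x²)/(1+γ(x)²)) γ'(x)`. -/
def mobiusDerivB (g : SL2) (x : ℝ) : ℝ :=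
  ((1 + x ^ 2) / (1 + mobius g x ^ 2)) * mobiusDeriv g x

/-- The Möbius action of `SL(2,ℝ)` on `ℝ ∪ {∞}`. -/
def mobiusOP (g : SL2) (x : OnePoint ℝ) : OnePoint ℝ :=
  Option.elim x
    (if g 1 0 = 0 then OnePoint.infty else ((g 0 0 / g 1 0 : ℝ) : OnePoint ℝ))
    (fun y => if g 1 0 * y + g 1 1 = 0 then OnePoint.infty
      else ((mobius g y : ℝ) : OnePoint ℝ))

/-- The pole `γ⁻¹(∞) = -d/c` of `γ = [[a,b],[c,d]]`. -/
def mobiusPole (g : SL2) : ℝ := -(g 1 1) / (g 1 0)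

/-- The distortion factor `α(γ, [x₀,x₁]) = log((γ⁻¹(∞) − x₁)/(γ⁻¹(∞) − x₀))`,
with the convention `α = 0` when `γ⁻¹(∞) = ∞` (i.e. `c = 0`). -/
def alphaDist (g : SL2) (x₀ x₁ : ℝ) : ℝ :=
  if g 1 0 = 0 then 0 else Real.log ((mobiusPole g - x₁) / (mobiusPole g - x₀))

/-- The letter `ā` paired with `a` in the alphabet `{1,…,2r}` (modelled by `Fin (2r)`). -/
def bar {r : ℕ} (a : Fin (2 * r)) : Fin (2 * r) :=
  if h : (a : ℕ) < r then ⟨(a : ℕ) + r, by omega⟩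
  else ⟨(a : ℕ) - r, by have := a.isLt; omega⟩

/-- Schottky data: `2r` disjoint compact intervals `I_a = [ξ₀ a, ξ₁ a]` on the real line and
transformations `γ_a ∈ SL(2,ℝ)` with `γ_ā = γ_a⁻¹` such that `γ_a` maps the complement (in
`ℝ ∪ {∞}`) of the interior of `I_ā` onto `I_a`. -/
structure SchottkyData (r : ℕ) where
  hr : 2 ≤ r
  ξ₀ : Fin (2 * r) → ℝ
  ξ₁ : Fin (2 * r) → ℝ
  hlt : ∀ a, ξ₀ a < ξ₁ a
  hdisj : ∀ a b, a ≠ b → Disjoint (Icc (ξ₀ a) (ξ₁ a)) (Icc (ξ₀ b) (ξ₁ b))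
  γ : Fin (2 * r) → SL2
  hinv : ∀ a, γ (bar a) = (γ a)⁻¹
  hmap : ∀ a, mobiusOP (γ a) ''
      (univ \ ((fun t : ℝ => (t : OnePoint ℝ)) '' Ioo (ξ₀ (bar a)) (ξ₁ (bar a))))
      = (fun t : ℝ => (t : OnePoint ℝ)) '' Icc (ξ₀ a) (ξ₁ a)

namespace SchottkyData

variable {r : ℕ}

/-- `l` is a word: no letter is followed by its bar. -/
def IsWord (_ : SchottkyData r) (l : List (Fin (2 * r))) : Prop :=
  l.Chain' fun p q => q ≠ bar p

/-- The group element `γ_𝐚 = γ_{a_1} ⋯ γ_{a_n}` of a word. -/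
def wordγ (S : SchottkyData r) (l : List (Fin (2 * r))) : SL2 :=
  (l.map S.γ).prod

/-- The interval `I_𝐚 = γ_{𝐚'}(I_{a_n})` of a nonempty word (and `∅` for the empty word). -/
def wordI (S : SchottkyData r) (l : List (Fin (2 * r))) : Set ℝ :=
  if h : l = [] then ∅
  else mobius (S.wordγ l.dropLast) '' Icc (S.ξ₀ (l.getLast h)) (S.ξ₁ (l.getLast h))

/-- The limit set `Λ_Γ = ⋂_n ⋃_{𝐚 ∈ W_n} I_𝐚`. -/
def limitSet (S : SchottkyData r) : Set ℝ :=
  ⋂ n : ℕ, ⋃ (l : List (Fin (2 * r))) (_ : S.IsWord l ∧ l.length = n + 1), S.wordI l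

/-- `μ` is the (δ-conformal) Patterson–Sullivan measure: a Borel probability measure
supported on the limit set satisfying the equivariance property under the group
generated by the Schottky transformations. -/
def IsPS (S : SchottkyData r) (δ : ℝ) (μ : Measure ℝ) : Prop :=
  IsProbabilityMeasure μ ∧ μ S.limitSetᶜ = 0 ∧
    ∀ g ∈ Subgroup.closure (Set.range S.γ), ∀ f : ℝ → ℝ, Measurable f →
      (∃ C, ∀ x, |f x| ≤ C) →
      ∫ x, f x ∂μ = ∫ x, f (mobius g x) * mobiusDerivB g x ^ δ ∂μ

/-- The partition `Z(τ) = {𝐚 ∈ W° : |I_𝐚| ≤ τ < |I_{𝐚'}|}` (with `|I_∅| = ∞`). -/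
def Zpart (S : SchottkyData r) (τ : ℝ) : Set (List (Fin (2 * r))) :=
  {l | S.IsWord l ∧ l ≠ [] ∧ (MeasureTheory.volume (S.wordI l)).toReal ≤ τ ∧
    (l.dropLast = [] ∨ τ < (MeasureTheory.volume (S.wordI l.dropLast)).toReal)}

end SchottkyData

/-- The length `|I|` of an interval `I ⊂ ℝ`. -/
def ivlen (I : Set ℝ) : ℝ := (MeasureTheory.volume I).toReal

/-- `𝐚 ⇝ 𝐛` : the last letter of `𝐚` equals the first letter of `𝐛`. -/
def chn {X : Type*} (l m : List X) : Prop :=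
  ∃ (h1 : l ≠ []) (h2 : m ≠ []), l.getLast h1 = m.head h2

/-- The center of an interval. -/
def ctr (I : Set ℝ) : ℝ := (sInf I + sSup I) / 2

end

noncomputable section

open MeasureTheory Set Real

/-!
By conformality of `μ` under `γ_𝐚'`, the integral of `1_{I_𝐚} f` equals that of
`x ↦ 1_{I_𝐚}(γ_𝐚' x) f(γ_𝐚' x) w_𝐚'(x)`. As `I_𝐚 = γ_𝐚'(I_b)`, and `γ_𝐚'` is injective away from
its pole while the limit set is `Γ`-invariant and contains no pole of any `γ_𝐜`, for `x ∈ Λ_Γ` we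
have `γ_𝐚' x ∈ I_𝐚` iff `x ∈ I_b`: the integrand is the `𝐚`-summand of `𝓛_Z f`. Summing over
`𝐚 ∈ Z` gives the theorem, because the intervals `I_𝐚`, `𝐚 ∈ Z`, partition `Λ_Γ`: intervals of
words are nested along prefixes and disjoint for incomparable words, each point of `Λ_Γ` lies in
intervals of arbitrarily long words, and two distinct elements of a partition are incomparable
(both would be the prefix in `Z` of a long word extending the longer one).
-/

def mobiusDen (g : SL2) (x : ℝ) : ℝ := g 1 0 * x + g 1 1

/-- The pole is excluded because `mobius g` takes the junk value `0` there. -/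
def MobiusMapsTo (g : SL2) (s t : Set ℝ) : Prop :=
  ∀ x ∈ s, mobiusDen g x ≠ 0 ∧ mobius g x ∈ t

lemma mobiusDen_one (x : ℝ) : mobiusDen 1 x = 1 := by simp [mobiusDen]

lemma mobius_one (x : ℝ) : mobius 1 x = x := by simp [mobius]

section Mobius

variable (g h : SL2) {x : ℝ}

lemma mobiusDen_mul (hx : mobiusDen h x ≠ 0) :
    mobiusDen (g * h) x = mobiusDen g (mobius h x) * mobiusDen h x := by
  simp only [mobiusDen, mobius, Matrix.SpecialLinearGroup.coe_mul, Matrix.mul_apply,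
    Fin.sum_univ_two] at hx ⊢
  field_simp
  ring

lemma mobius_mul (hx : mobiusDen h x ≠ 0) : mobius (g * h) x = mobius g (mobius h x) := by
  have hgx := mobiusDen_mul g h hx
  simp only [mobiusDen, mobius, Matrix.SpecialLinearGroup.coe_mul, Matrix.mul_apply,
    Fin.sum_univ_two] at hx hgx ⊢
  rw [hgx]
  field_simp
  ring

lemma mobius_injOn : InjOn (mobius g) {x | mobiusDen g x ≠ 0} := by
  intro x hx y hy hxy
  have hdet : g 0 0 * g 1 1 - g 0 1 * g 1 0 = 1 := by
    have := g.property
    rwa [Matrix.det_fin_two] at this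
  rw [mobius, mobius, div_eq_div_iff (show g 1 0 * x + g 1 1 ≠ 0 from hx)
    (show g 1 0 * y + g 1 1 ≠ 0 from hy)] at hxy
  linear_combination hxy - (x - y) * hdet

lemma mobiusDerivB_pos (hx : mobiusDen g x ≠ 0) : 0 < mobiusDerivB g x := by
  have hx' : g 1 0 * x + g 1 1 ≠ 0 := hx
  unfold mobiusDerivB mobiusDeriv
  positivity

lemma measurable_mobius : Measurable (mobius g) := by
  unfold mobius
  fun_prop

lemma continuousOn_mobius {s : Set ℝ} (hs : ∀ x ∈ s, mobiusDen g x ≠ 0) :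
    ContinuousOn (mobius g) s :=
  ContinuousOn.div (by fun_prop) (by fun_prop) hs

lemma continuousOn_mobiusDerivB_rpow (δ : ℝ) {s : Set ℝ} (hs : ∀ x ∈ s, mobiusDen g x ≠ 0) :
    ContinuousOn (fun x => mobiusDerivB g x ^ δ) s := by
  refine ContinuousOn.rpow_const ?_ fun x hx => Or.inl (mobiusDerivB_pos g (hs x hx)).ne'
  unfold mobiusDerivB mobiusDeriv
  refine ContinuousOn.mul ?_ (ContinuousOn.inv₀ (by fun_prop) fun x hx => pow_ne_zero 2 (hs x hx))
  exact ContinuousOn.div (by fun_prop) (continuousOn_const.add ((continuousOn_mobius g hs).pow 2))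
    fun x _ => by positivity

lemma mobiusMapsTo_one (s : Set ℝ) : MobiusMapsTo 1 s s :=
  fun x hx => ⟨by simp [mobiusDen_one], by rwa [mobius_one]⟩

variable {g h}

lemma MobiusMapsTo.mul {s t u : Set ℝ} (hg : MobiusMapsTo g t u) (hh : MobiusMapsTo h s t) :
    MobiusMapsTo (g * h) s u := by
  intro x hx
  obtain ⟨hhx, hht⟩ := hh x hx
  obtain ⟨hgx, hgu⟩ := hg _ hht
  exact ⟨by rw [mobiusDen_mul g h hhx]; exact mul_ne_zero hgx hhx, by rwa [mobius_mul g h hhx]⟩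

end Mobius

lemma List.exists_append_cons_of_not_prefix {α : Type*} :
    ∀ {l m : List α}, ¬ l <+: m → ¬ m <+: l →
      ∃ p a b s t, a ≠ b ∧ l = p ++ a :: s ∧ m = p ++ b :: t
  | [], _, h, _ => absurd List.nil_prefix h
  | _ :: _, [], _, h => absurd List.nil_prefix h
  | x :: l, y :: m, h₁, h₂ => by
    by_cases hxy : x = y
    · subst hxy
      obtain ⟨p, a, b, s, t, hab, rfl, rfl⟩ := List.exists_append_cons_of_not_prefix
        (fun h => h₁ (List.cons_prefix_cons.2 ⟨rfl, h⟩))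
        (fun h => h₂ (List.cons_prefix_cons.2 ⟨rfl, h⟩))
      exact ⟨x :: p, a, b, s, t, hab, rfl, rfl⟩
    · exact ⟨[], x, y, l, m, hxy, rfl, rfl⟩

namespace SchottkyData

variable {r : ℕ} (S : SchottkyData r)

lemma mobiusMapsTo_γ (a : Fin (2 * r)) :
    MobiusMapsTo (S.γ a) (Ioo (S.ξ₀ (bar a)) (S.ξ₁ (bar a)))ᶜ (Icc (S.ξ₀ a) (S.ξ₁ a)) := by
  intro x hx
  have hx' : (x : OnePoint ℝ) ∈ univ \ ((↑) '' Ioo (S.ξ₀ (bar a)) (S.ξ₁ (bar a))) :=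
    ⟨trivial, by rintro ⟨t, ht, hte⟩; exact hx (OnePoint.coe_injective hte ▸ ht)⟩
  obtain ⟨t, ht, hte⟩ : mobiusOP (S.γ a) x ∈ (↑) '' Icc (S.ξ₀ a) (S.ξ₁ a) :=
    S.hmap a ▸ mem_image_of_mem _ hx'
  change t = if mobiusDen (S.γ a) x = 0 then OnePoint.infty else (mobius (S.γ a) x : OnePoint ℝ)
    at hte
  split_ifs at hte with hden
  · exact absurd hte (OnePoint.coe_ne_infty t)
  · exact ⟨hden, OnePoint.coe_injective hte ▸ ht⟩

lemma mobiusMapsTo_γ_of_ne_bar {a b : Fin (2 * r)} (hb : b ≠ bar a) :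
    MobiusMapsTo (S.γ a) (Icc (S.ξ₀ b) (S.ξ₁ b)) (Icc (S.ξ₀ a) (S.ξ₁ a)) :=
  fun x hx => S.mobiusMapsTo_γ a x fun hx' =>
    (S.hdisj b (bar a) hb).ne_of_mem hx (Ioo_subset_Icc_self hx') rfl

lemma wordγ_cons (a : Fin (2 * r)) (l : List (Fin (2 * r))) :
    S.wordγ (a :: l) = S.γ a * S.wordγ l := by
  simp [wordγ]

lemma wordγ_mem_closure (l : List (Fin (2 * r))) :
    S.wordγ l ∈ Subgroup.closure (range S.γ) :=
  list_prod_mem <| List.forall_mem_map.2 fun a _ => Subgroup.subset_closure ⟨a, rfl⟩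

lemma mobiusMapsTo_wordγ {l : List (Fin (2 * r))} {b : Fin (2 * r)} (hw : S.IsWord (l ++ [b])) :
    MobiusMapsTo (S.wordγ l) (Icc (S.ξ₀ b) (S.ξ₁ b))
      (Icc (S.ξ₀ ((l ++ [b]).head (by simp))) (S.ξ₁ ((l ++ [b]).head (by simp)))) := by
  induction l with
  | nil => exact mobiusMapsTo_one _
  | cons a l ih =>
    rw [wordγ_cons]
    exact (S.mobiusMapsTo_γ_of_ne_bar (hw.rel_head? (List.head?_eq_some_head _))).mul
      (ih hw.tail)

lemma wordI_singleton (a : Fin (2 * r)) : S.wordI [a] = Icc (S.ξ₀ a) (S.ξ₁ a) := by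
  simp [wordI, wordγ, mobius_one]

lemma wordI_append_singleton (l : List (Fin (2 * r))) (b : Fin (2 * r)) :
    S.wordI (l ++ [b]) = mobius (S.wordγ l) '' Icc (S.ξ₀ b) (S.ξ₁ b) := by
  simp [wordI]

lemma wordI_subset_head {l : List (Fin (2 * r))} (hw : S.IsWord l) (hl : l ≠ []) :
    S.wordI l ⊆ Icc (S.ξ₀ (l.head hl)) (S.ξ₁ (l.head hl)) := by
  obtain ⟨p, b, rfl⟩ := l.eq_nil_or_concat'.resolve_left hl
  rw [wordI_append_singleton]
  rintro _ ⟨z, hz, rfl⟩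
  exact (S.mobiusMapsTo_wordγ hw z hz).2

lemma wordI_cons {a : Fin (2 * r)} {l : List (Fin (2 * r))} (hw : S.IsWord l) (hl : l ≠ []) :
    S.wordI (a :: l) = mobius (S.γ a) '' S.wordI l := by
  obtain ⟨p, b, rfl⟩ := l.eq_nil_or_concat'.resolve_left hl
  rw [← List.cons_append, wordI_append_singleton, wordI_append_singleton, image_image, wordγ_cons]
  exact image_congr fun z hz => mobius_mul _ _ (S.mobiusMapsTo_wordγ hw z hz).1

lemma wordI_subset_of_prefix {l m : List (Fin (2 * r))} (hw : S.IsWord l) (hm : m ≠ [])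
    (hml : m <+: l) : S.wordI l ⊆ S.wordI m := by
  induction m generalizing l with
  | nil => exact absurd rfl hm
  | cons a m ih =>
    obtain ⟨l, rfl⟩ : ∃ l', l = a :: l' := by
      obtain ⟨t, rfl⟩ := hml
      exact ⟨m ++ t, rfl⟩
    rcases eq_or_ne m [] with rfl | hm'
    · rw [wordI_singleton]
      exact S.wordI_subset_head hw (List.cons_ne_nil a l)
    · have hml' := (List.cons_prefix_cons.1 hml).2
      have hl : l ≠ [] := fun h => hm' (List.prefix_nil.1 (h ▸ hml'))
      rw [S.wordI_cons (l := l) hw.tail hl, S.wordI_cons (l := m) (hw.prefix hml).tail hm']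
      exact image_mono (ih hw.tail hm' hml')

lemma disjoint_wordI {l m : List (Fin (2 * r))} (hl : S.IsWord l) (hm : S.IsWord m)
    (hlm : ¬ l <+: m) (hml : ¬ m <+: l) : Disjoint (S.wordI l) (S.wordI m) := by
  obtain ⟨p, a, b, s, t, hab, rfl, rfl⟩ := List.exists_append_cons_of_not_prefix hlm hml
  have hpa : p ++ [a] <+: p ++ a :: s := ⟨s, by simp⟩
  have hpb : p ++ [b] <+: p ++ b :: t := ⟨t, by simp⟩
  refine .mono (S.wordI_subset_of_prefix hl (by simp) hpa)
    (S.wordI_subset_of_prefix hm (by simp) hpb) ?_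
  rw [wordI_append_singleton, wordI_append_singleton]
  exact (S.hdisj a b hab).image (mobius_injOn _)
    (fun z hz => (S.mobiusMapsTo_wordγ (hl.prefix hpa) z hz).1)
    (fun z hz => (S.mobiusMapsTo_wordγ (hm.prefix hpb) z hz).1)

lemma mem_limitSet_iff {x : ℝ} :
    x ∈ S.limitSet ↔ ∀ n, ∃ l, S.IsWord l ∧ n < l.length ∧ x ∈ S.wordI l := by
  simp only [limitSet, mem_iInter, mem_iUnion, exists_prop]
  refine ⟨fun h n => ?_, fun h n => ?_⟩
  · obtain ⟨l, ⟨hw, hl⟩, hx⟩ := h n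
    exact ⟨l, hw, by omega, hx⟩
  · obtain ⟨l, hw, hl, hx⟩ := h n
    refine ⟨l.take (n + 1), ⟨hw.take _, by simp; omega⟩,
      S.wordI_subset_of_prefix hw ?_ (List.take_prefix _ _) hx⟩
    simp only [ne_eq, List.take_eq_nil_iff]
    rintro (h | rfl) <;> simp_all

lemma mobiusDen_γ_ne_zero_and_exists_wordI_mem {l : List (Fin (2 * r))} (hw : S.IsWord l)
    (hl : 2 ≤ l.length) {x : ℝ} (hx : x ∈ S.wordI l) (a : Fin (2 * r)) :
    mobiusDen (S.γ a) x ≠ 0 ∧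
      ∃ v, S.IsWord v ∧ l.length ≤ v.length + 1 ∧ mobius (S.γ a) x ∈ S.wordI v := by
  obtain ⟨c, u, rfl⟩ := List.exists_cons_of_ne_nil (l := l) (by rintro rfl; simp at hl)
  have hu : u ≠ [] := by rintro rfl; simp at hl
  have hwu : S.IsWord u := hw.tail
  by_cases hc : c = bar a
  · -- `γ_a` cancels the leading letter `ā`
    subst hc
    rw [S.wordI_cons hwu hu] at hx
    obtain ⟨y, hy, rfl⟩ := hx
    have hy_den := (S.mobiusMapsTo_γ_of_ne_bar (hw.rel_head? (List.head?_eq_some_head hu)) y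
      (S.wordI_subset_head hwu hu hy)).1
    have hinv : S.γ a * S.γ (bar a) = 1 := by rw [S.hinv, mul_inv_cancel]
    have hden := mobiusDen_mul (S.γ a) _ hy_den
    rw [hinv, mobiusDen_one] at hden
    refine ⟨left_ne_zero_of_mul_eq_one hden.symm, u, hwu, by simp, ?_⟩
    rwa [← mobius_mul _ _ hy_den, hinv, mobius_one]
  · refine ⟨(S.mobiusMapsTo_γ_of_ne_bar hc x (S.wordI_subset_head hw (List.cons_ne_nil c u) hx)).1,
      a :: c :: u, List.IsChain.cons_cons hc hw, by simp, ?_⟩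
    rw [S.wordI_cons hw (List.cons_ne_nil c u)]
    exact mem_image_of_mem _ hx

lemma mobiusMapsTo_γ_limitSet (a : Fin (2 * r)) :
    MobiusMapsTo (S.γ a) S.limitSet S.limitSet := by
  intro x hx
  rw [mem_limitSet_iff] at hx
  have step : ∀ n, mobiusDen (S.γ a) x ≠ 0 ∧
      ∃ v, S.IsWord v ∧ n < v.length ∧ mobius (S.γ a) x ∈ S.wordI v := fun n => by
    obtain ⟨l, hw, hl, hxl⟩ := hx (n + 1)
    obtain ⟨hden, v, hv, hlv, hxv⟩ :=
      S.mobiusDen_γ_ne_zero_and_exists_wordI_mem hw (by omega) hxl a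
    exact ⟨hden, v, hv, by omega, hxv⟩
  exact ⟨(step 0).1, S.mem_limitSet_iff.2 fun n => (step n).2⟩

lemma mobiusMapsTo_wordγ_limitSet (l : List (Fin (2 * r))) :
    MobiusMapsTo (S.wordγ l) S.limitSet S.limitSet := by
  induction l with
  | nil => exact mobiusMapsTo_one _
  | cons a l ih =>
    rw [wordγ_cons]
    exact (S.mobiusMapsTo_γ_limitSet a).mul ih

lemma exists_isWord_append_singleton {l : List (Fin (2 * r))} (hw : S.IsWord l) :
    ∃ c, S.IsWord (l ++ [c]) := by
  have := S.hr
  rcases l.eq_nil_or_concat' with rfl | ⟨p, b, rfl⟩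
  · exact ⟨⟨0, by omega⟩, List.isChain_singleton _⟩
  · have : Nontrivial (Fin (2 * r)) := Fin.nontrivial_iff_two_le.2 (by omega)
    obtain ⟨c, hc⟩ := exists_ne (bar b)
    exact ⟨c, hw.append (List.isChain_singleton c) (by simp [hc])⟩

lemma exists_isWord_prefix_le_length {l : List (Fin (2 * r))} (hw : S.IsWord l) (n : ℕ) :
    ∃ w, S.IsWord w ∧ l <+: w ∧ n ≤ w.length := by
  induction n with
  | zero => exact ⟨l, hw, List.prefix_refl l, Nat.zero_le _⟩
  | succ n ih =>
    obtain ⟨w, hw, hlw, hn⟩ := ih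
    obtain ⟨c, hc⟩ := S.exists_isWord_append_singleton hw
    exact ⟨w ++ [c], hc, hlw.trans (List.prefix_append _ _), by simp; omega⟩

def IsPartition (Z : Finset (List (Fin (2 * r)))) : Prop :=
  (∀ l ∈ Z, S.IsWord l ∧ l ≠ []) ∧
    ∃ N : ℕ, ∀ l, S.IsWord l → N ≤ l.length → ∃! m, m ∈ Z ∧ m <+: l

namespace IsPartition

variable {S} {Z : Finset (List (Fin (2 * r)))}

lemma not_prefix (hZ : S.IsPartition Z) {l m : List (Fin (2 * r))} (hl : l ∈ Z) (hm : m ∈ Z)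
    (hlm : l ≠ m) : ¬ l <+: m := by
  intro hpre
  obtain ⟨N, hN⟩ := hZ.2
  obtain ⟨w, hw, hmw, hNw⟩ := S.exists_isWord_prefix_le_length (hZ.1 m hm).1 N
  exact hlm ((hN w hw hNw).unique ⟨hl, hpre.trans hmw⟩ ⟨hm, hmw⟩)

lemma existsUnique_mem_wordI (hZ : S.IsPartition Z) {x : ℝ} (hx : x ∈ S.limitSet) :
    ∃! l, l ∈ Z ∧ x ∈ S.wordI l := by
  obtain ⟨N, hN⟩ := hZ.2
  obtain ⟨w, hw, hNw, hxw⟩ := S.mem_limitSet_iff.1 hx N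
  obtain ⟨m, ⟨hmZ, hmw⟩, -⟩ := hN w hw hNw.le
  have hxm : x ∈ S.wordI m := S.wordI_subset_of_prefix hw (hZ.1 m hmZ).2 hmw hxw
  refine ⟨m, ⟨hmZ, hxm⟩, fun l ⟨hlZ, hxl⟩ => ?_⟩
  by_contra hlm
  exact (S.disjoint_wordI (hZ.1 l hlZ).1 (hZ.1 m hmZ).1 (hZ.not_prefix hlZ hmZ hlm)
    (hZ.not_prefix hmZ hlZ (Ne.symm hlm))).ne_of_mem hxl hxm rfl

lemma sum_indicator_wordI (hZ : S.IsPartition Z) {x : ℝ} (hx : x ∈ S.limitSet) (f : ℝ → ℝ) :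
    ∑ l ∈ Z, (S.wordI l).indicator f x = f x := by
  obtain ⟨l, ⟨hlZ, hxl⟩, hl⟩ := hZ.existsUnique_mem_wordI hx
  rw [Finset.sum_eq_single_of_mem l hlZ fun m hmZ hml =>
    indicator_of_notMem (fun hxm => hml (hl m ⟨hmZ, hxm⟩)) f, indicator_of_mem hxl]

end IsPartition

lemma isCompact_wordI {l : List (Fin (2 * r))} (hw : S.IsWord l) : IsCompact (S.wordI l) := by
  rcases l.eq_nil_or_concat' with rfl | ⟨p, b, rfl⟩
  · simp [wordI]
  rw [wordI_append_singleton]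
  exact isCompact_Icc.image_of_continuousOn
    (continuousOn_mobius _ fun z hz => (S.mobiusMapsTo_wordγ hw z hz).1)

/-- The `𝐚 = l` summand of `𝓛_Z f`. -/
def transferTerm (δ : ℝ) (f : ℝ → ℝ) (l : List (Fin (2 * r))) (x : ℝ) : ℝ :=
  (l.getLast?).elim 0 fun b => (Icc (S.ξ₀ b) (S.ξ₁ b)).indicator
    (fun y => f (mobius (S.wordγ l.dropLast) y) * mobiusDerivB (S.wordγ l.dropLast) y ^ δ) x

lemma transferTerm_append_singleton (δ : ℝ) (f : ℝ → ℝ) (p : List (Fin (2 * r)))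
    (b : Fin (2 * r)) :
    S.transferTerm δ f (p ++ [b]) = (Icc (S.ξ₀ b) (S.ξ₁ b)).indicator
      (fun y => f (mobius (S.wordγ p) y) * mobiusDerivB (S.wordγ p) y ^ δ) := by
  ext x
  simp [transferTerm]

variable {μ : Measure ℝ} {f : ℝ → ℝ}

lemma integrable_indicator_wordI [IsFiniteMeasure μ] {l : List (Fin (2 * r))} (hw : S.IsWord l)
    (hf : Measurable f) (hfb : ∃ C, ∀ x, |f x| ≤ C) : Integrable ((S.wordI l).indicator f) μ := by
  obtain ⟨C, hC⟩ := hfb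
  exact (Integrable.of_bound hf.aestronglyMeasurable C (ae_of_all _ hC)).indicator
    (S.isCompact_wordI hw).isClosed.measurableSet

lemma integrable_transferTerm [IsFiniteMeasure μ] {l : List (Fin (2 * r))} (hw : S.IsWord l)
    (δ : ℝ) (hf : Measurable f) (hfb : ∃ C, ∀ x, |f x| ≤ C) :
    Integrable (S.transferTerm δ f l) μ := by
  rcases l.eq_nil_or_concat' with rfl | ⟨p, b, rfl⟩
  · exact integrable_zero ℝ ℝ μ
  obtain ⟨C, hC⟩ := hfb
  rw [transferTerm_append_singleton, integrable_indicator_iff measurableSet_Icc]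
  have hweight := ContinuousOn.integrableOn_compact (μ := μ) isCompact_Icc
    (continuousOn_mobiusDerivB_rpow _ δ fun z hz => (S.mobiusMapsTo_wordγ hw z hz).1)
  exact hweight.bdd_mul (hf.comp (measurable_mobius _)).aestronglyMeasurable
    (ae_of_all _ fun x => hC _)

namespace IsPS

variable {S} {δ : ℝ}

lemma ae_mem_limitSet (hμ : S.IsPS δ μ) : ∀ᵐ x ∂μ, x ∈ S.limitSet :=
  mem_ae_iff.2 hμ.2.1

lemma integral_indicator_wordI (hμ : S.IsPS δ μ) {l : List (Fin (2 * r))} (hw : S.IsWord l)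
    (hf : Measurable f) (hfb : ∃ C, ∀ x, |f x| ≤ C) :
    ∫ x, (S.wordI l).indicator f x ∂μ = ∫ x, S.transferTerm δ f l x ∂μ := by
  rcases l.eq_nil_or_concat' with rfl | ⟨p, b, rfl⟩
  · simp [wordI, transferTerm]
  obtain ⟨C, hC⟩ := hfb
  rw [hμ.2.2 _ (S.wordγ_mem_closure p) _
    (hf.indicator (S.isCompact_wordI hw).isClosed.measurableSet)
    ⟨C, fun x => norm_indicator_le_norm_self f x |>.trans (hC x)⟩, transferTerm_append_singleton]
  refine integral_congr_ae (hμ.ae_mem_limitSet.mono fun x hx => ?_)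
  -- on the limit set `γ_p` has no pole, so it is injective on `I_b ∪ {x}`
  have hmem : mobius (S.wordγ p) x ∈ S.wordI (p ++ [b]) ↔ x ∈ Icc (S.ξ₀ b) (S.ξ₁ b) := by
    rw [wordI_append_singleton]
    exact (mobius_injOn _).mem_image_iff (fun z hz => (S.mobiusMapsTo_wordγ hw z hz).1)
      (S.mobiusMapsTo_wordγ_limitSet p x hx).1
  dsimp only
  by_cases hxb : x ∈ Icc (S.ξ₀ b) (S.ξ₁ b)
  · rw [indicator_of_mem hxb, indicator_of_mem (hmem.2 hxb)]
  · rw [indicator_of_notMem hxb, indicator_of_notMem (mt hmem.1 hxb), zero_mul]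

end IsPS

end SchottkyData

theorem transfer_operator_invariance_general (r : ℕ) (S : SchottkyData r) (δ : ℝ)
    (μ : Measure ℝ) (hμ : S.IsPS δ μ)
    (Z : Finset (List (Fin (2 * r))))
    (hZw : ∀ l ∈ Z, S.IsWord l ∧ l ≠ [])
    (hZpart : ∃ N : ℕ, ∀ l : List (Fin (2 * r)), S.IsWord l → N ≤ l.length →
      ∃! m, m ∈ Z ∧ m <+: l)
    (f : ℝ → ℝ) (hf : Measurable f) (hfb : ∃ C, ∀ x, |f x| ≤ C) :
    ∫ x in S.limitSet, f x ∂μ =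
      ∫ x in S.limitSet, (∑ l ∈ Z, (l.getLast?).elim 0 fun b =>
        Set.indicator (Icc (S.ξ₀ b) (S.ξ₁ b))
          (fun y => f (mobius (S.wordγ l.dropLast) y) *
            mobiusDerivB (S.wordγ l.dropLast) y ^ δ) x) ∂μ := by
  have := hμ.1
  have hZ : S.IsPartition Z := ⟨hZw, hZpart⟩
  have hΛ := hμ.ae_mem_limitSet
  rw [Measure.restrict_eq_self_of_ae_mem hΛ]
  calc ∫ x, f x ∂μ = ∫ x, ∑ l ∈ Z, (S.wordI l).indicator f x ∂μ :=
        integral_congr_ae (hΛ.mono fun x hx => (hZ.sum_indicator_wordI hx f).symm)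
    _ = ∑ l ∈ Z, ∫ x, S.transferTerm δ f l x ∂μ := by
        rw [integral_finsetSum _ fun l hl => S.integrable_indicator_wordI (hZw l hl).1 hf hfb]
        exact Finset.sum_congr rfl fun l hl => hμ.integral_indicator_wordI (hZw l hl).1 hf hfb
    _ = ∫ x, ∑ l ∈ Z, S.transferTerm δ f l x ∂μ :=
        (integral_finsetSum _ fun l hl => S.integrable_transferTerm (hZw l hl).1 δ hf hfb).symm

/-- **Invariance of the Patterson–Sullivan measure under the transfer operator:** if
`Z ⊂ W°` is a partition (every sufficiently long word has a unique prefix in `Z`), then for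
every bounded Borel `f` one has `∫_{Λ_Γ} f dμ = ∫_{Λ_Γ} 𝓛_Z f dμ`, where for `x ∈ I_b`,
`𝓛_Z f(x) = Σ_{𝐚 ∈ Z, 𝐚 ⇝ b} f(γ_{𝐚'}(x)) w_{𝐚'}(x)` with `w_𝐜(x) = |γ'_𝐜(x)|_B^δ`. -/
theorem transfer_operator_invariance (r : ℕ) (S : SchottkyData r) (δ : ℝ)
    (hδ0 : 0 < δ) (hδ1 : δ < 1) (μ : Measure ℝ) (hμ : S.IsPS δ μ)
    (Z : Finset (List (Fin (2 * r))))
    (hZw : ∀ l ∈ Z, S.IsWord l ∧ l ≠ [])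
    (hZpart : ∃ N : ℕ, ∀ l : List (Fin (2 * r)), S.IsWord l → N ≤ l.length →
      ∃! m, m ∈ Z ∧ m <+: l)
    (f : ℝ → ℝ) (hf : Measurable f) (hfb : ∃ C, ∀ x, |f x| ≤ C) :
    ∫ x in S.limitSet, f x ∂μ =
      ∫ x in S.limitSet, (∑ l ∈ Z, (l.getLast?).elim 0 fun b =>
        Set.indicator (Icc (S.ξ₀ b) (S.ξ₁ b))
          (fun y => f (mobius (S.wordγ l.dropLast) y) *
            mobiusDerivB (S.wordγ l.dropLast) y ^ δ) x) ∂μ :=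
  transfer_operator_invariance_general r S δ μ hμ Z hZw hZpart f hf hfb

end
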